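/- arXiv:2511.23388 — 2 statements merged into one kernel-verified Lean document; each statement's English description precedes it below -/
import Mathlib

section
/- Let M̂ be a matching of size ĥ in a bipartite graph Ĝ = (U ∪ V̂, Ê). Let V be another set of online vertices with types, such that the number of vertices of V whose type does not appear with sufficient multiplicity in V̂ (unpredicted vertices) is m. Then the Mimic strategy, which matches each predicted arriving vertex according to an unused edge of M̂ of its type, produces a matching of size at least ĥ - m. -/
/-- `cstar t` is the number of arriving online vertices of type `t`, `chat t` the predicted
number, and `mhat t` the number of edges of the maximum predicted matching `M̂` whose online
endpoint has type `t` (so `mhat t ≤ chat t` and `∑ t, mhat t = H`).  Mimic matches, for each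
type `t`, `min (cstar t) (mhat t)` vertices, and this total is at least `H - m`, where
`m = ∑ t, max (cstar t - chat t) 0` is the number of unpredicted vertices. -/
theorem stmt_4 {T : Type*} [Fintype T] (cstar chat mhat : T → ℕ) (n H m : ℕ)
    (hstar : ∑ t, cstar t = n) (hhat : ∑ t, chat t = n)
    (hslot : ∀ t, mhat t ≤ chat t) (hH : ∑ t, mhat t = H)
    (hm : m = ∑ t, max (cstar t - chat t) 0) :
    H ≤ (∑ t, min (cstar t) (mhat t)) + m := by
  have key : ∑ t, (chat t - cstar t) = ∑ t, (cstar t - chat t) := by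
    have h1 : ∀ t : T, chat t + (cstar t - chat t) = cstar t + (chat t - cstar t) := by
      intro t; omega
    have e1 : ∑ t, chat t + ∑ t, (cstar t - chat t)
        = ∑ t, cstar t + ∑ t, (chat t - cstar t) := by
      rw [← Finset.sum_add_distrib, ← Finset.sum_add_distrib]
      exact Finset.sum_congr rfl fun t _ => h1 t
    omega
  have hmm : m = ∑ t, (cstar t - chat t) := by
    rw [hm]; exact Finset.sum_congr rfl fun t _ => by omega
  have pt : ∀ t : T, mhat t ≤ min (cstar t) (mhat t) + (chat t - cstar t) := by
    intro t; have := hslot t; omega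
  calc H = ∑ t, mhat t := hH.symm
    _ ≤ ∑ t, (min (cstar t) (mhat t) + (chat t - cstar t)) :=
        Finset.sum_le_sum fun t _ => pt t
    _ = (∑ t, min (cstar t) (mhat t)) + ∑ t, (chat t - cstar t) :=
        Finset.sum_add_distrib
    _ = (∑ t, min (cstar t) (mhat t)) + m := by rw [key, hmm]
end

section
/- Let X be a Poisson random variable with parameter m > 0. Then for any x > 0, Pr[|X - m| ≥ x] ≤ 2·exp(-x²/(2(m + x))). -/
open MeasureTheory ProbabilityTheory

/-!
Chernoff's bound with the Poisson moment generating function `exp (m * (exp t - 1))`.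
For the upper tail take `t = x / (m + x)`: writing `m = (m + x) * (1 - t)`, the exponent becomes
`(m + x) * ((1 - t) * (exp t - 1 - t) - t ^ 2)`, and the cubic Taylor bound for `exp` on `[0, 1]`
gives `(1 - t) * (exp t - 1 - t) ≤ t ^ 2 / 2`. For the lower tail take `t = -x / m` and use
`exp (-s) ≤ 1 - s + s ^ 2 / 2`, which even gives `exp (-x ^ 2 / (2 * m))`.
-/

namespace Real

theorem exp_neg_le_one_sub_add_sq_div_two {u : ℝ} (hu : 0 ≤ u) :
    exp (-u) ≤ 1 - u + u ^ 2 / 2 := by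
  have hcubic : 1 + u + u ^ 2 / 2 + u ^ 3 / 6 ≤ exp u := by
    have := sum_le_exp_of_nonneg hu 4
    norm_num [Finset.sum_range_succ, Nat.factorial] at this
    linarith
  have hquad : 0 ≤ 1 - u + u ^ 2 / 2 := by nlinarith [sq_nonneg (u - 1)]
  rw [exp_neg, inv_le_iff_one_le_mul₀ (exp_pos u)]
  calc 1 ≤ (1 - u + u ^ 2 / 2) * (1 + u + u ^ 2 / 2 + u ^ 3 / 6) := by
        nlinarith [pow_nonneg hu 3, pow_nonneg hu 4, pow_nonneg hu 5]
    _ ≤ (1 - u + u ^ 2 / 2) * exp u := by gcongr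

theorem one_sub_mul_exp_sub_one_sub_le {t : ℝ} (ht₀ : 0 ≤ t) (ht₁ : t ≤ 1) :
    (1 - t) * (exp t - 1 - t) ≤ t ^ 2 / 2 := by
  have hcubic : exp t ≤ 1 + t + t ^ 2 / 2 + t ^ 3 * (2 / 9) := by
    have := exp_bound' ht₀ ht₁ (n := 3) (by norm_num)
    norm_num [Finset.sum_range_succ, Nat.factorial] at this
    linarith
  calc (1 - t) * (exp t - 1 - t) ≤ (1 - t) * (t ^ 2 / 2 + t ^ 3 * (2 / 9)) := by
        gcongr; linarith
    _ ≤ t ^ 2 / 2 := by nlinarith [pow_nonneg ht₀ 3, pow_nonneg ht₀ 4]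

end Real

namespace ProbabilityTheory

open Real
open scoped NNReal Nat

lemma hasLaw_poissonMeasure {Ω : Type*} {mΩ : MeasurableSpace Ω} {P : Measure Ω} {X : Ω → ℕ}
    (hX : Measurable X) {r : ℝ≥0}
    (h : ∀ n : ℕ, P {ω | X ω = n} = ENNReal.ofReal (exp (-r) * r ^ n / n !)) :
    HasLaw X Po(r) P where
  map_eq := Measure.ext_of_singleton fun n ↦ by
    rw [Measure.map_apply hX (measurableSet_singleton n), poissonMeasure_singleton]
    exact h n

lemma poisson_weight_mul_exp_mul (r : ℝ≥0) (t : ℝ) (n : ℕ) :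
    exp (-r) * r ^ n / n ! * exp (t * n) = exp (-r) * ((r * exp t) ^ n / n !) := by
  rw [mul_pow, mul_comm t, exp_nat_mul]
  ring

lemma integrable_exp_mul_poissonMeasure (r : ℝ≥0) (t : ℝ) :
    Integrable (fun n : ℕ ↦ exp (t * n)) Po(r) := by
  simp_rw [integrable_poissonMeasure_iff, norm_of_nonneg (exp_pos _).le,
    poisson_weight_mul_exp_mul]
  exact (NormedSpace.expSeries_div_summable (r * exp t)).mul_left _

lemma mgf_poissonMeasure (r : ℝ≥0) (t : ℝ) :
    mgf (fun n : ℕ ↦ (n : ℝ)) Po(r) t = exp (r * (exp t - 1)) := by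
  rw [mgf, integral_poissonMeasure' (integrable_exp_mul_poissonMeasure r t)]
  simp_rw [smul_eq_mul, poisson_weight_mul_exp_mul]
  rw [tsum_mul_left, (NormedSpace.expSeries_div_hasSum_exp (r * exp t : ℝ)).tsum_eq,
    ← exp_eq_exp_ℝ, ← exp_add]
  ring_nf

section HasLaw

variable {Ω : Type*} {mΩ : MeasurableSpace Ω} {P : Measure Ω} {X : Ω → ℕ} {r : ℝ≥0}

lemma HasLaw.integrable_exp_mul_of_poisson (hX : HasLaw X Po(r) P) (t : ℝ) :
    Integrable (fun ω ↦ exp (t * X ω)) P := by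
  have h := integrable_exp_mul_poissonMeasure r t
  rw [← hX.map_eq] at h
  exact (integrable_map_measure .of_discrete hX.aemeasurable).1 h

lemma HasLaw.mgf_of_poisson (hX : HasLaw X Po(r) P) (t : ℝ) :
    mgf (fun ω ↦ (X ω : ℝ)) P t = exp (r * (exp t - 1)) := by
  rw [← mgf_poissonMeasure, ← hX.map_eq, mgf_map hX.aemeasurable .of_discrete]
  rfl

lemma HasLaw.measureReal_ge_le_of_poisson (hX : HasLaw X Po(r) P) {t : ℝ} (ht : 0 ≤ t)
    (ε : ℝ) : P.real {ω | ε ≤ X ω} ≤ exp (r * (exp t - 1) - t * ε) := by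
  have := hX.isProbabilityMeasure
  calc P.real {ω | ε ≤ X ω} ≤ exp (-t * ε) * mgf (fun ω ↦ (X ω : ℝ)) P t :=
        measure_ge_le_exp_mul_mgf ε ht (hX.integrable_exp_mul_of_poisson t)
    _ = exp (r * (exp t - 1) - t * ε) := by
        rw [hX.mgf_of_poisson, ← exp_add]
        ring_nf

lemma HasLaw.measureReal_le_le_of_poisson (hX : HasLaw X Po(r) P) {t : ℝ} (ht : t ≤ 0)
    (ε : ℝ) : P.real {ω | X ω ≤ ε} ≤ exp (r * (exp t - 1) - t * ε) := by
  have := hX.isProbabilityMeasure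
  calc P.real {ω | X ω ≤ ε} ≤ exp (-t * ε) * mgf (fun ω ↦ (X ω : ℝ)) P t :=
        measure_le_le_exp_mul_mgf ε ht (hX.integrable_exp_mul_of_poisson t)
    _ = exp (r * (exp t - 1) - t * ε) := by
        rw [hX.mgf_of_poisson, ← exp_add]
        ring_nf

lemma HasLaw.poisson_upper_tail (hX : HasLaw X Po(r) P) {x : ℝ} (hx : 0 < x) :
    P.real {ω | r + x ≤ X ω} ≤ exp (-x ^ 2 / (2 * (r + x))) := by
  have ha : 0 < (r : ℝ) + x := by positivity
  set t := x / (r + x) with ht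
  have htx : t * (r + x) = x := div_mul_cancel₀ x ha.ne'
  have ht₁ : t ≤ 1 := (div_le_one ha).2 (by linarith [r.2])
  refine (hX.measureReal_ge_le_of_poisson (t := t) (by positivity) _).trans (exp_le_exp.2 ?_)
  calc (r : ℝ) * (exp t - 1) - t * (r + x) = (r + x) * ((1 - t) * (exp t - 1 - t) - t ^ 2) := by
        linear_combination (exp t - 1) * htx
    _ ≤ (r + x) * (t ^ 2 / 2 - t ^ 2) := by
        gcongr
        exact one_sub_mul_exp_sub_one_sub_le (by positivity) ht₁
    _ = -x ^ 2 / (2 * (r + x)) := by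
        rw [ht]
        field_simp
        ring

lemma HasLaw.poisson_lower_tail (hX : HasLaw X Po(r) P) (hr : 0 < r) {x : ℝ} (hx : 0 ≤ x) :
    P.real {ω | X ω ≤ r - x} ≤ exp (-x ^ 2 / (2 * r)) := by
  have hr' : (0 : ℝ) < r := hr
  set s := x / r with hs
  refine (hX.measureReal_le_le_of_poisson (t := -s) (neg_nonpos.2 (by positivity)) _).trans
    (exp_le_exp.2 ?_)
  calc (r : ℝ) * (exp (-s) - 1) - -s * (r - x) = r * (exp (-s) - (1 - s)) - s * x := by ring
    _ ≤ r * (s ^ 2 / 2) - s * x := by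
        gcongr
        linarith [exp_neg_le_one_sub_add_sq_div_two (u := s) (by positivity)]
    _ = -x ^ 2 / (2 * r) := by
        rw [hs]
        field_simp
        ring

end HasLaw

end ProbabilityTheory

theorem stmt_8_general {Ω : Type*} [MeasureSpace Ω]
    (m : ℝ) (hm : 0 < m) (X : Ω → ℕ) (hmeas : Measurable X)
    (hpois : ∀ k : ℕ, ℙ {ω | X ω = k} =
      ENNReal.ofReal (Real.exp (-m) * m ^ k / Nat.factorial k))
    (x : ℝ) (hx : 0 < x) :
    (ℙ {ω | x ≤ |(X ω : ℝ) - m|}).toReal ≤ 2 * Real.exp (-x ^ 2 / (2 * (m + x))) := by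
  let r : NNReal := ⟨m, hm.le⟩
  have hX : HasLaw X (poissonMeasure r) ℙ := hasLaw_poissonMeasure hmeas hpois
  have := hX.isProbabilityMeasure
  have htails : {ω | x ≤ |(X ω : ℝ) - m|} ⊆ {ω | m + x ≤ X ω} ∪ {ω | X ω ≤ m - x} := by
    intro ω (hω : x ≤ |(X ω : ℝ) - m|)
    rcases le_abs'.1 hω with h | h
    · exact Or.inr (show (X ω : ℝ) ≤ m - x by linarith)
    · exact Or.inl (show m + x ≤ (X ω : ℝ) by linarith)
  have hexp : Real.exp (-x ^ 2 / (2 * m)) ≤ Real.exp (-x ^ 2 / (2 * (m + x))) := by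
    rw [Real.exp_le_exp, neg_div, neg_div, neg_le_neg_iff]
    gcongr
    linarith
  calc (ℙ {ω | x ≤ |(X ω : ℝ) - m|}).toReal
      ≤ (ℙ : Measure Ω).real ({ω | m + x ≤ X ω} ∪ {ω | X ω ≤ m - x}) := measureReal_mono htails
    _ ≤ (ℙ : Measure Ω).real {ω | m + x ≤ X ω} + (ℙ : Measure Ω).real {ω | X ω ≤ m - x} :=
        measureReal_union_le _ _
    _ ≤ Real.exp (-x ^ 2 / (2 * (m + x))) + Real.exp (-x ^ 2 / (2 * (m + x))) :=
        add_le_add (hX.poisson_upper_tail hx) ((hX.poisson_lower_tail hm hx.le).trans hexp)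
    _ = 2 * Real.exp (-x ^ 2 / (2 * (m + x))) := by ring

theorem stmt_8 {Ω : Type*} [MeasureSpace Ω] [IsProbabilityMeasure (ℙ : Measure Ω)]
    (m : ℝ) (hm : 0 < m) (X : Ω → ℕ) (hmeas : Measurable X)
    (hpois : ∀ k : ℕ, ℙ {ω | X ω = k} =
      ENNReal.ofReal (Real.exp (-m) * m ^ k / Nat.factorial k))
    (x : ℝ) (hx : 0 < x) :
    (ℙ {ω | x ≤ |(X ω : ℝ) - m|}).toReal ≤ 2 * Real.exp (-x ^ 2 / (2 * (m + x))) :=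
  stmt_8_general m hm X hmeas hpois x hx
end
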